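/- arXiv:1202.4659 — 8 statements merged into one kernel-verified Lean document; each statement's English description precedes it below -/
import Mathlib

section
/- Let n ≥ 1 and let f ∈ ℂ[z₁,…,zₙ] be a nonzero polynomial. Then every connected component of the complement ℝⁿ ∖ A_f of the amoeba of f is a convex subset of ℝⁿ. -/
/-!
Let `E` be a component of the complement of the amoeba; it is open because the amoeba is closed.
Nearby segments with rational directions fill any segment, so it suffices to show that if `u` and
`u + l • k` lie in `E`, with `k ∈ ℤ^σ` and `l ≥ 0`, then no zero `z` of `f` lies over a point
`u + μ • k`, `0 ≤ μ ≤ l`. Restricting `f` to the monomial curve `q ↦ z * e^{-μ k} * q ^ k` and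
clearing denominators gives a polynomial `P` in one variable with the zero `q = e^μ`. Moving the
base point of the curve over `E`, the restrictions of `f` to the unit circle never vanish, so by
the argument principle the number of their zeros in the unit disc does not change; at the base
point `u + l • k` it is the number of zeros of `P` in the disc of radius `e^l`. Hence `P` has no
zeros in the annulus `1 ≤ ‖q‖ ≤ e^l`, a contradiction.
-/

open Complex Metric Set Filter Topology
open scoped Real Polynomial

theorem zpow_sum₀ {ι G₀ : Type*} [CommGroupWithZero G₀] {a : G₀} (ha : a ≠ 0) (s : Finset ι)
    (n : ι → ℤ) : a ^ (∑ i ∈ s, n i) = ∏ i ∈ s, a ^ n i := by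
  classical
  induction s using Finset.induction_on with
  | empty => simp
  | insert i s hi ih => rw [Finset.sum_insert hi, Finset.prod_insert hi, zpow_add₀ ha, ih]

theorem Nat.isEmbedding_coe_complex : IsEmbedding ((↑) : ℕ → ℂ) := by
  have := Complex.isometry_ofReal.isEmbedding.comp Nat.isClosedEmbedding_coe_real.isEmbedding
  convert this using 1
  funext n
  simp

theorem tendsto_inv_smul_floor_mul {σ : Type*} (x : σ → ℝ) :
    Tendsto (fun M : ℕ => (M : ℝ)⁻¹ • fun j => (⌊M * x j⌋ : ℝ)) atTop (𝓝 x) := by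
  refine tendsto_pi_nhds.mpr fun j => ?_
  have hlow : Tendsto (fun M : ℕ => x j - (M : ℝ)⁻¹) atTop (𝓝 (x j)) := by
    simpa using tendsto_const_nhds.sub (tendsto_inv_atTop_nhds_zero_nat (𝕜 := ℝ))
  refine tendsto_of_tendsto_of_tendsto_of_le_of_le' hlow tendsto_const_nhds ?_ ?_ <;>
    filter_upwards [eventually_gt_atTop 0] with M hM
  · have hM' : (0 : ℝ) < M := Nat.cast_pos.mpr hM
    calc x j - (M : ℝ)⁻¹ = (M : ℝ)⁻¹ * (M * x j - 1) := by field_simp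
      _ ≤ (M : ℝ)⁻¹ * ⌊M * x j⌋ :=
        mul_le_mul_of_nonneg_left (Int.sub_one_lt_floor _).le (inv_nonneg.mpr hM'.le)
  · exact (inv_mul_le_iff₀ (Nat.cast_pos.mpr hM)).mpr (Int.floor_le _)

theorem IsOpen.convex_of_int_segment_subset {σ : Type*} {E : Set (σ → ℝ)} (hE : IsOpen E)
    (h : ∀ u ∈ E, ∀ (k : σ → ℤ) (l : ℝ), 0 ≤ l → u + l • (fun j => (k j : ℝ)) ∈ E →
      segment ℝ u (u + l • fun j => (k j : ℝ)) ⊆ E) :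
    Convex ℝ E := by
  intro u hu v hv a b ha hb hab
  -- move both endpoints so that their difference becomes `e`, keeping `a • u + b • v` fixed
  let Φ : (σ → ℝ) → (σ → ℝ) × (σ → ℝ) := fun e => (u + b • (v - u - e), u + b • (v - u - e) + e)
  have hΦ : Tendsto Φ (𝓝 (v - u)) (𝓝 (u, v)) := by
    convert (show Continuous Φ by fun_prop).tendsto (v - u) using 2
    simp [Φ]
  obtain ⟨M, hM⟩ := ((hΦ.comp (tendsto_inv_smul_floor_mul (v - u))).eventually
    ((hE.prod hE).mem_nhds ⟨hu, hv⟩)).exists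
  refine h _ hM.1 _ _ (by positivity) hM.2 ⟨a, b, ha, hb, hab, ?_⟩
  obtain rfl : a = 1 - b := by linarith
  simp only [Φ, Function.comp_apply]
  module

section rescaleToLog

variable {σ : Type*}

noncomputable def rescaleToLog (z : σ → ℂ) (y : σ → ℝ) : σ → ℂ :=
  fun j => z j * cexp ↑(y j - Real.log ‖z j‖)

theorem rescaleToLog_ne_zero {z : σ → ℂ} (hz : ∀ j, z j ≠ 0) (y : σ → ℝ) (j : σ) :
    rescaleToLog z y j ≠ 0 :=
  mul_ne_zero (hz j) (exp_ne_zero _)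

theorem log_norm_rescaleToLog {z : σ → ℂ} (hz : ∀ j, z j ≠ 0) (y : σ → ℝ) (j : σ) :
    Real.log ‖rescaleToLog z y j‖ = y j := by
  rw [rescaleToLog, norm_mul, norm_exp_ofReal, Real.log_mul (norm_ne_zero_iff.mpr (hz j))
    (Real.exp_pos _).ne', Real.log_exp, add_sub_cancel]

theorem rescaleToLog_log_norm (z : σ → ℂ) : rescaleToLog z (fun j => Real.log ‖z j‖) = z := by
  ext j
  simp [rescaleToLog]

theorem rescaleToLog_add_smul (z : σ → ℂ) (y : σ → ℝ) (k : σ → ℤ) (a : ℝ) :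
    rescaleToLog z (y + a • fun j => (k j : ℝ)) = fun j => rescaleToLog z y j * cexp a ^ k j := by
  ext j
  simp only [rescaleToLog, Pi.add_apply, Pi.smul_apply, smul_eq_mul, ← exp_int_mul, mul_assoc,
    ← exp_add]
  push_cast
  ring_nf

theorem continuous_rescaleToLog (z : σ → ℂ) : Continuous (rescaleToLog z) := by
  unfold rescaleToLog
  fun_prop

end rescaleToLog

namespace circleIntegral

theorem integral_sub_inv_eq_ite {r : ℝ} (hr : 0 ≤ r) {w : ℂ} (hw : ‖w‖ ≠ r) :
    (∮ z in C(0, r), (z - w)⁻¹) = if ‖w‖ < r then 2 * π * I else 0 := by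
  split_ifs with hlt
  · exact circleIntegral.integral_sub_inv_of_mem_ball (mem_ball_zero_iff.mpr hlt)
  have hne : ∀ z ∈ closedBall (0 : ℂ) r, z - w ≠ 0 := fun z hz h => by
    rw [mem_closedBall_zero_iff, sub_eq_zero.mp h] at hz
    exact hw (le_antisymm hz (not_lt.mp hlt))
  exact circleIntegral_eq_zero_of_differentiable_on_off_countable hr countable_empty
    (fun z hz => ((continuousAt_id.sub continuousAt_const).inv₀ (hne z hz)).continuousWithinAt)
    fun z hz => (differentiableAt_id.sub_const w).inv (hne z (ball_subset_closedBall hz.1))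

theorem integral_multiset_sum_sub_inv {r : ℝ} (hr : 0 ≤ r) (t : Multiset ℂ)
    (ht : ∀ w ∈ t, ‖w‖ ≠ r) :
    (∮ z in C(0, r), (t.map fun w => (z - w)⁻¹).sum) =
      2 * π * I * (t.filter (‖·‖ < r)).card := by
  have hcont : ∀ w ∈ t, ContinuousOn (fun z => (z - w)⁻¹) (sphere 0 r) := fun w hw =>
    (continuousOn_id.sub continuousOn_const).inv₀ fun z hz (h : z - w = 0) => ht w hw <| by
      rw [← sub_eq_zero.mp h, ← mem_sphere_zero_iff_norm.mp hz]
  induction t using Multiset.induction_on with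
  | empty => simp [circleIntegral]
  | cons w t ih =>
    have hw := ht w (Multiset.mem_cons_self w t)
    simp only [Multiset.map_cons, Multiset.sum_cons]
    have hcont' : ∀ w' ∈ t, ContinuousOn (fun z => (z - w')⁻¹) (sphere 0 r) :=
      fun w' hw' => hcont w' (Multiset.mem_cons_of_mem hw')
    rw [integral_add ((hcont w (Multiset.mem_cons_self w t)).circleIntegrable hr)
      ((continuousOn_multiset_sum _ hcont').circleIntegrable hr),
      ih (fun w' hw' => ht w' (Multiset.mem_cons_of_mem hw')) hcont',
      integral_sub_inv_eq_ite hr hw]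
    split_ifs with hlt
    · rw [Multiset.filter_cons_of_pos (p := (‖·‖ < r)) _ hlt, Multiset.card_cons]; push_cast; ring
    · rw [Multiset.filter_cons_of_neg (p := (‖·‖ < r)) _ hlt, zero_add]

end circleIntegral

namespace Polynomial

theorem circleIntegral_derivative_div_eq_card_roots (P : ℂ[X]) {r : ℝ} (hr : 0 ≤ r)
    (hP : ∀ z ∈ sphere (0 : ℂ) r, P.eval z ≠ 0) :
    (∮ z in C(0, r), P.derivative.eval z / P.eval z) =
      2 * π * I * (P.roots.filter (‖·‖ < r)).card := by
  have hroots : ∀ w ∈ P.roots, ‖w‖ ≠ r := fun w hw hwr =>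
    hP w (mem_sphere_zero_iff_norm.mpr hwr) (isRoot_of_mem_roots hw)
  rw [← circleIntegral.integral_multiset_sum_sub_inv hr _ hroots]
  refine circleIntegral.integral_congr hr fun z hz => ?_
  simp only [(IsAlgClosed.splits P).eval_derivative_div_eval_of_ne_zero (hP z hz), one_div]

theorem card_roots_filter_norm_lt_eq_of_continuous {X : Type*} [TopologicalSpace X]
    [PreconnectedSpace X] (P : X → ℂ[X]) {r : ℝ} (hr : 0 ≤ r)
    (hP : Continuous fun p : X × ℂ => (P p.1).eval p.2)
    (hP' : Continuous fun p : X × ℂ => (P p.1).derivative.eval p.2)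
    (hne : ∀ t, ∀ z ∈ sphere (0 : ℂ) r, (P t).eval z ≠ 0) (t₁ t₂ : X) :
    ((P t₁).roots.filter (‖·‖ < r)).card = ((P t₂).roots.filter (‖·‖ < r)).card := by
  have hW : Continuous fun t => ∮ z in C(0, r), (P t).derivative.eval z / (P t).eval z := by
    refine intervalIntegral.continuous_parametric_intervalIntegral_of_continuous' ?_ _ _
    have hc : Continuous fun p : X × ℝ => (p.1, circleMap 0 r p.2) :=
      continuous_fst.prodMk ((continuous_circleMap 0 r).comp continuous_snd)
    simp only [Function.uncurry_def, deriv_circleMap, smul_eq_mul]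
    exact ((continuous_circleMap 0 r).comp continuous_snd).mul continuous_const |>.mul
      ((hP'.comp hc).div (hP.comp hc) fun p => hne p.1 _ (circleMap_mem_sphere 0 hr p.2))
  have hcount : Continuous fun t => ((P t).roots.filter (‖·‖ < r)).card := by
    rw [Nat.isEmbedding_coe_complex.continuous_iff]
    convert hW.div_const (2 * π * I) using 1
    ext t
    rw [Function.comp_apply, circleIntegral_derivative_div_eq_card_roots _ hr (hne t),
      mul_div_cancel_left₀ _ (by simp [Real.pi_ne_zero])]
  exact PreconnectedSpace.constant ‹_› hcount

theorem card_roots_filter_norm_lt_comp_C_mul_X (P : ℂ[X]) {a : ℂ} (ha : a ≠ 0) (r : ℝ) :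
    ((P.comp (C a * X)).roots.filter (‖·‖ < r)).card =
      (P.roots.filter (‖·‖ < ‖a‖ * r)).card := by
  have := P.map_roots_comp_C_mul_X_add_C a 0 (IsUnit.mk0 a ha)
  simp only [map_zero, add_zero] at this
  rw [← this, Multiset.filter_map, Multiset.card_map]
  congr 2
  ext w
  simp [mul_lt_mul_iff_right₀ (norm_pos_iff.mpr ha)]

theorem eval_ne_zero_of_card_roots_filter_norm_lt_eq {P : ℂ[X]} (hP : P ≠ 0) {r R : ℝ}
    (hcard : (P.roots.filter (‖·‖ < r)).card = (P.roots.filter (‖·‖ < R)).card)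
    (hR : ∀ z ∈ sphere (0 : ℂ) R, P.eval z ≠ 0) {q : ℂ} (hrq : r ≤ ‖q‖) (hqR : ‖q‖ ≤ R) :
    P.eval q ≠ 0 := by
  intro hq
  have hqR' : ‖q‖ < R := hqR.lt_of_ne fun h => hR q (mem_sphere_zero_iff_norm.mpr h) hq
  have hle : P.roots.filter (‖·‖ < r) ≤ P.roots.filter (‖·‖ < R) :=
    Multiset.monotone_filter_right _ fun w hw => hw.trans_le (hrq.trans hqR'.le)
  have hmem : q ∈ P.roots.filter (‖·‖ < R) :=
    Multiset.mem_filter.mpr ⟨(mem_roots hP).mpr hq, hqR'⟩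
  rw [← Multiset.eq_of_le_of_card_le hle hcard.ge] at hmem
  exact (Multiset.mem_filter.mp hmem).2.not_ge hrq

end Polynomial

namespace MvPolynomial

variable {σ : Type*}

def amoeba (f : MvPolynomial σ ℂ) : Set (σ → ℝ) :=
  {x | ∃ z : σ → ℂ, (∀ i, z i ≠ 0) ∧ eval z f = 0 ∧ ∀ i, x i = Real.log ‖z i‖}

theorem mem_amoeba_iff_exists_circle {f : MvPolynomial σ ℂ} {x : σ → ℝ} :
    x ∈ amoeba f ↔ ∃ w : σ → Circle, eval (fun i => (Real.exp (x i) : ℂ) * w i) f = 0 := by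
  constructor
  · rintro ⟨z, hz0, hfz, hx⟩
    refine ⟨fun i => Circle.exp (z i).arg, ?_⟩
    rw [← hfz]
    congr 2 with i
    rw [hx i, Real.exp_log (norm_pos_iff.mpr (hz0 i))]
    exact norm_mul_exp_arg_mul_I (z i)
  · rintro ⟨w, hw⟩
    refine ⟨_, fun i => mul_ne_zero (by exact_mod_cast (Real.exp_pos _).ne') (w i).coe_ne_zero, hw,
      fun i => ?_⟩
    rw [norm_mul, Circle.norm_coe, mul_one, norm_real, Real.norm_of_nonneg (Real.exp_pos _).le,
      Real.log_exp]

theorem isClosed_amoeba (f : MvPolynomial σ ℂ) : IsClosed (amoeba f) := by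
  have : amoeba f = Prod.fst ''
      {p : (σ → ℝ) × (σ → Circle) | eval (fun i => (Real.exp (p.1 i) : ℂ) * p.2 i) f = 0} := by
    ext x
    simp [mem_amoeba_iff_exists_circle]
  rw [this]
  refine isClosedMap_fst_of_compactSpace _ (isClosed_eq ?_ continuous_const)
  exact (continuous_eval f).comp (by fun_prop)

variable [Fintype σ]

noncomputable def curveShift (f : MvPolynomial σ ℂ) (k : σ → ℤ) : ℕ :=
  f.support.sup fun α => (-∑ j, k j * α j).toNat

theorem curveShift_add_nonneg {f : MvPolynomial σ ℂ} (k : σ → ℤ) {α : σ →₀ ℕ}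
    (hα : α ∈ f.support) : 0 ≤ (curveShift f k : ℤ) + ∑ j, k j * α j := by
  have := Finset.le_sup (f := fun α : σ →₀ ℕ => (-∑ j, k j * α j).toNat) hα
  have := Int.self_le_toNat (-∑ j, k j * α j)
  unfold curveShift
  omega

/-- `q ^ curveShift f k * f (c * q ^ k)`, as a polynomial in `q`. -/
noncomputable def curveRestriction (f : MvPolynomial σ ℂ) (c : σ → ℂ) (k : σ → ℤ) : ℂ[X] :=
  ∑ α ∈ f.support,
    Polynomial.monomial (curveShift f k + ∑ j, k j * α j).toNat (coeff α f * ∏ j, c j ^ α j)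

theorem eval_curveRestriction (f : MvPolynomial σ ℂ) (c : σ → ℂ) (k : σ → ℤ) {q : ℂ}
    (hq : q ≠ 0) : (curveRestriction f c k).eval q =
      q ^ curveShift f k * eval (fun j => c j * q ^ k j) f := by
  rw [curveRestriction, eval_eq', Finset.mul_sum, Polynomial.eval_finsetSum]
  refine Finset.sum_congr rfl fun α hα => ?_
  rw [Polynomial.eval_monomial, ← zpow_natCast, Int.toNat_of_nonneg (curveShift_add_nonneg k hα),
    zpow_add₀ hq, zpow_natCast, zpow_sum₀ hq]
  have hpow : ∀ j, (c j * q ^ k j) ^ α j = c j ^ α j * q ^ (k j * α j) := fun j => by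
    rw [mul_pow, ← zpow_natCast (q ^ k j), ← zpow_mul]
  simp only [hpow, Finset.prod_mul_distrib]
  ring

theorem curveRestriction_comp_C_mul_X (f : MvPolynomial σ ℂ) (c : σ → ℂ) (k : σ → ℤ) {s : ℂ}
    (hs : s ≠ 0) : (curveRestriction f c k).comp (Polynomial.C s * Polynomial.X) =
      Polynomial.C (s ^ curveShift f k) * curveRestriction f (fun j => c j * s ^ k j) k := by
  refine Polynomial.eq_of_infinite_eval_eq _ _
    ((finite_singleton 0).infinite_compl.mono fun q (hq : q ≠ 0) => ?_)
  simp only [mem_ofPred_eq, Polynomial.eval_comp, Polynomial.eval_mul, Polynomial.eval_C,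
    Polynomial.eval_X, eval_curveRestriction _ _ _ hq,
    eval_curveRestriction _ _ _ (mul_ne_zero hs hq), mul_zpow, mul_pow, mul_assoc]

theorem continuous_eval_curveRestriction {X : Type*} [TopologicalSpace X] (f : MvPolynomial σ ℂ)
    {c : X → σ → ℂ} (hc : Continuous c) (k : σ → ℤ) :
    Continuous fun p : X × ℂ => (curveRestriction f (c p.1) k).eval p.2 := by
  simp only [curveRestriction, Polynomial.eval_finsetSum, Polynomial.eval_monomial]
  fun_prop

theorem continuous_eval_derivative_curveRestriction {X : Type*} [TopologicalSpace X]
    (f : MvPolynomial σ ℂ) {c : X → σ → ℂ} (hc : Continuous c) (k : σ → ℤ) :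
    Continuous fun p : X × ℂ => (curveRestriction f (c p.1) k).derivative.eval p.2 := by
  simp only [curveRestriction, Polynomial.derivative_sum, Polynomial.derivative_monomial,
    Polynomial.eval_finsetSum, Polynomial.eval_monomial]
  fun_prop

theorem log_norm_mem_amoeba_of_eval_curveRestriction_eq_zero {f : MvPolynomial σ ℂ} {c : σ → ℂ}
    (hc : ∀ j, c j ≠ 0) (k : σ → ℤ) {q : ℂ} (hq : q ≠ 0)
    (h : (curveRestriction f c k).eval q = 0) :
    (fun j => Real.log ‖c j‖ + k j * Real.log ‖q‖) ∈ amoeba f := by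
  rw [eval_curveRestriction f c k hq] at h
  refine ⟨fun j => c j * q ^ k j, fun j => mul_ne_zero (hc j) (zpow_ne_zero _ hq),
    (mul_eq_zero.mp h).resolve_left (pow_ne_zero _ hq), fun j => ?_⟩
  rw [norm_mul, norm_zpow, Real.log_mul (norm_ne_zero_iff.mpr (hc j))
    (zpow_ne_zero _ (norm_ne_zero_iff.mpr hq)), Real.log_zpow]

theorem card_roots_filter_curveRestriction_mul_zpow (f : MvPolynomial σ ℂ) (c : σ → ℂ)
    (k : σ → ℤ) {s : ℂ} (hs : s ≠ 0) (r : ℝ) :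
    ((curveRestriction f (fun j => c j * s ^ k j) k).roots.filter (‖·‖ < r)).card =
      ((curveRestriction f c k).roots.filter (‖·‖ < ‖s‖ * r)).card := by
  rw [← Polynomial.card_roots_filter_norm_lt_comp_C_mul_X _ hs,
    curveRestriction_comp_C_mul_X _ _ _ hs, Polynomial.roots_C_mul _ (pow_ne_zero _ hs)]

theorem eval_curveRestriction_rescaleToLog_ne_zero {f : MvPolynomial σ ℂ} {z : σ → ℂ}
    (hz : ∀ j, z j ≠ 0) {y : σ → ℝ} (k : σ → ℤ) {a : ℝ}
    (hy : y + a • (fun j => (k j : ℝ)) ∉ amoeba f) {q : ℂ} (hq : ‖q‖ = Real.exp a) :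
    (curveRestriction f (rescaleToLog z y) k).eval q ≠ 0 := fun hzero => hy <| by
  have := log_norm_mem_amoeba_of_eval_curveRestriction_eq_zero (rescaleToLog_ne_zero hz y) k
    (norm_ne_zero_iff.mp (hq ▸ (Real.exp_pos a).ne')) hzero
  convert this using 1
  ext j
  simp [hq, log_norm_rescaleToLog hz, mul_comm]

theorem card_roots_curveRestriction_eq_of_isPreconnected {f : MvPolynomial σ ℂ}
    {E : Set (σ → ℝ)} (hE : IsPreconnected E) (hEA : E ⊆ (amoeba f)ᶜ) {z : σ → ℂ}
    (hz : ∀ j, z j ≠ 0) (k : σ → ℤ) {y₁ y₂ : σ → ℝ} (hy₁ : y₁ ∈ E) (hy₂ : y₂ ∈ E) :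
    ((curveRestriction f (rescaleToLog z y₁) k).roots.filter (‖·‖ < 1)).card =
      ((curveRestriction f (rescaleToLog z y₂) k).roots.filter (‖·‖ < 1)).card := by
  have := isPreconnected_iff_preconnectedSpace.mp hE
  have hc : Continuous fun y : E => rescaleToLog z y :=
    (continuous_rescaleToLog z).comp continuous_subtype_val
  exact Polynomial.card_roots_filter_norm_lt_eq_of_continuous
    (fun y : E => curveRestriction f (rescaleToLog z y) k) zero_le_one
    (continuous_eval_curveRestriction f hc k) (continuous_eval_derivative_curveRestriction f hc k)
    (fun y q hq => eval_curveRestriction_rescaleToLog_ne_zero hz k (a := 0) (by simpa using hEA y.2)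
      (by simpa using hq)) ⟨y₁, hy₁⟩ ⟨y₂, hy₂⟩

theorem segment_subset_amoeba_compl {f : MvPolynomial σ ℂ} {E : Set (σ → ℝ)}
    (hE : IsPreconnected E) (hEA : E ⊆ (amoeba f)ᶜ) {u : σ → ℝ} (hu : u ∈ E) (k : σ → ℤ)
    {l : ℝ} (hl : 0 ≤ l) (hv : u + l • (fun j => (k j : ℝ)) ∈ E) :
    segment ℝ u (u + l • fun j => (k j : ℝ)) ⊆ (amoeba f)ᶜ := by
  rw [segment_eq_image']
  rintro _ ⟨t, ⟨ht0, ht1⟩, rfl⟩ ⟨z, hz0, hfz, hlog⟩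
  simp only [add_sub_cancel_left, smul_smul] at hlog
  set P := curveRestriction f (rescaleToLog z u) k
  have hsphere : ∀ a : ℝ, u + a • (fun j => (k j : ℝ)) ∈ E →
      ∀ q ∈ sphere (0 : ℂ) (Real.exp a), P.eval q ≠ 0 := fun a ha q hq =>
    eval_curveRestriction_rescaleToLog_ne_zero hz0 k (hEA ha) (mem_sphere_zero_iff_norm.mp hq)
  have hcard : (P.roots.filter (‖·‖ < 1)).card = (P.roots.filter (‖·‖ < Real.exp l)).card := by
    rw [card_roots_curveRestriction_eq_of_isPreconnected hE hEA hz0 k hu hv,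
      rescaleToLog_add_smul, card_roots_filter_curveRestriction_mul_zpow _ _ _ (exp_ne_zero _),
      norm_exp_ofReal, mul_one]
  have hP : P ≠ 0 := fun h0 => hsphere 0 (by simpa using hu) 1 (by simp) (by simp [h0])
  refine Polynomial.eval_ne_zero_of_card_roots_filter_norm_lt_eq hP hcard (hsphere l hv)
    (q := cexp ↑(t * l)) (by rw [norm_exp_ofReal]; exact Real.one_le_exp (by positivity))
    (by rw [norm_exp_ofReal]; exact Real.exp_le_exp.mpr (mul_le_of_le_one_left hl ht1)) ?_
  have hzP : u + (t * l) • (fun j => (k j : ℝ)) = fun j => Real.log ‖z j‖ := by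
    ext j
    exact hlog j
  rw [eval_curveRestriction _ _ _ (exp_ne_zero _), ← rescaleToLog_add_smul, hzP,
    rescaleToLog_log_norm, hfz, mul_zero]

end MvPolynomial

theorem amoeba_complement_components_convex_general
    (n : ℕ) (f : MvPolynomial (Fin n) ℂ)
    (A : Set (Fin n → ℝ))
    (hA : A = {x : Fin n → ℝ | ∃ z : Fin n → ℂ, (∀ i, z i ≠ 0) ∧
      MvPolynomial.eval z f = 0 ∧ ∀ i, x i = Real.log ‖z i‖}) :
    ∀ x ∈ Aᶜ, Convex ℝ (connectedComponentIn Aᶜ x) := by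
  change A = MvPolynomial.amoeba f at hA
  subst hA
  intro x _
  have hopen := (MvPolynomial.isClosed_amoeba f).isOpen_compl.connectedComponentIn (x := x)
  refine hopen.convex_of_int_segment_subset fun u hu k l hl hv => ?_
  rw [connectedComponentIn_eq hu] at hv ⊢
  have hsub := MvPolynomial.segment_subset_amoeba_compl isPreconnected_connectedComponentIn
    (connectedComponentIn_subset _ _)
    (mem_connectedComponentIn (connectedComponentIn_subset _ _ hu)) k hl hv
  exact (convex_segment _ _).isPreconnected.subset_connectedComponentIn
    (left_mem_segment ℝ _ _) hsub

/-- For a nonzero polynomial `f ∈ ℂ[z₁,…,zₙ]`, `n ≥ 1`, every connected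
component of the complement `ℝⁿ ∖ A_f` of the amoeba
`A_f = Log({z ∈ (ℂ∖{0})ⁿ : f(z) = 0})` is a convex subset of `ℝⁿ`. -/
theorem amoeba_complement_components_convex
    (n : ℕ) (hn : 1 ≤ n) (f : MvPolynomial (Fin n) ℂ) (hf : f ≠ 0)
    (A : Set (Fin n → ℝ))
    (hA : A = {x : Fin n → ℝ | ∃ z : Fin n → ℂ, (∀ i, z i ≠ 0) ∧
      MvPolynomial.eval z f = 0 ∧ ∀ i, x i = Real.log ‖z i‖}) :
    ∀ x ∈ Aᶜ, Convex ℝ (connectedComponentIn Aᶜ x) :=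
  amoeba_complement_components_convex_general n f A hA
end

section
/- Let a ∈ ℂⁿ be nonzero, and let H := {t ∈ ℂⁿ : ∑_{i=1}^n aᵢ tᵢ = 0}, regarded as a real subspace of ℂⁿ ≅ ℝ^{2n}. Then the ℝ-linear map H → ℝⁿ, t ↦ (Re t₁, …, Re tₙ), is surjective if and only if there is no nonzero complex number c with c·a ∈ ℝⁿ (i.e., if and only if a is not a complex scalar multiple of a real vector). -/
/-!
If `c • a` is a nonzero real vector `b`, then for `t ∈ H` with `Re t = b` the real part of
`∑ bᵢ tᵢ = c ∑ aᵢ tᵢ = 0` is `∑ bᵢ²`, so `b = 0`. Conversely, writing `t = x + i y` with `x, y`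
real, `t ∈ H` means `∑ yᵢ aᵢ = i ∑ aᵢ xᵢ`, so it suffices that the real linear combinations of
the `aᵢ` exhaust `ℂ`. If they do not, some nonzero real functional on `ℂ` kills every `aᵢ`, and
every real functional on `ℂ` has the form `z ↦ Im (c z)`.
-/

open Complex

theorem LinearMap.exists_apply_eq_im_mul (f : ℂ →ₗ[ℝ] ℝ) : ∃ c : ℂ, ∀ z, f z = (c * z).im := by
  refine ⟨⟨f I, f 1⟩, fun z => ?_⟩
  have hz : z = z.re • (1 : ℂ) + z.im • I := by apply Complex.ext <;> simp
  conv_lhs => rw [hz, map_add, map_smul, map_smul]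
  simp only [smul_eq_mul, mul_im]
  ring

theorem exists_im_mul_eq_zero_of_not_surjective {ι : Type*} [Fintype ι] (a : ι → ℂ)
    (h : ¬ Function.Surjective (Fintype.linearCombination ℝ a)) :
    ∃ c : ℂ, c ≠ 0 ∧ ∀ i, (c * a i).im = 0 := by
  classical
  obtain ⟨f, hf, hker⟩ := (LinearMap.range (Fintype.linearCombination ℝ a)).exists_le_ker_of_lt_top
    (lt_top_iff_ne_top.mpr (mt LinearMap.range_eq_top.mp h))
  obtain ⟨c, hc⟩ := f.exists_apply_eq_im_mul
  refine ⟨c, ?_, fun i => ?_⟩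
  · rintro rfl
    exact hf (LinearMap.ext fun z => by simp [hc])
  · have : f (a i) = 0 := by
      simpa using hker ⟨Pi.single i 1, Fintype.linearCombination_apply_single ℝ a i 1⟩
    rwa [hc] at this

theorem eq_zero_of_sum_mul_eq_zero_of_re_eq {ι : Type*} [Fintype ι] (b : ι → ℝ) (t : ι → ℂ)
    (hsum : ∑ i, b i * t i = 0) (hre : ∀ i, (t i).re = b i) : b = 0 := by
  have hsq : ∑ i, b i * b i = 0 := by
    simpa [re_sum, hre] using congrArg re hsum
  funext i
  exact (Finset.sum_mul_self_eq_zero_iff _ b).mp hsq i (Finset.mem_univ i)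

/-- Let `a ∈ ℂⁿ` be nonzero and `H = {t ∈ ℂⁿ : ∑ aᵢ tᵢ = 0}`.  The ℝ-linear
map `H → ℝⁿ`, `t ↦ (Re t₁, …, Re tₙ)` is surjective iff there is no nonzero `c ∈ ℂ` with
`c·a ∈ ℝⁿ`, i.e. iff `a` is not a complex scalar multiple of a real vector. -/
theorem re_surjective_on_hyperplane_iff_not_real_direction
    (n : ℕ) (a : Fin n → ℂ) (ha : a ≠ 0) :
    (∀ x : Fin n → ℝ, ∃ t : Fin n → ℂ,
        (∑ i, a i * t i = 0) ∧ ∀ i, (t i).re = x i)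
      ↔ ¬ ∃ c : ℂ, c ≠ 0 ∧ ∀ i, (c * a i).im = 0 := by
  constructor
  · rintro hsurj ⟨c, hc, him⟩
    set b : Fin n → ℝ := fun i => (c * a i).re
    have hb : ∀ i, c * a i = b i := fun i => ext rfl (him i)
    obtain ⟨t, hsum, hre⟩ := hsurj b
    have hb0 : b = 0 := eq_zero_of_sum_mul_eq_zero_of_re_eq b t
      (by simp only [← hb, mul_assoc, ← Finset.mul_sum, hsum, mul_zero]) hre
    have hca : ∀ i, c * a i = 0 := fun i => by rw [hb i, hb0, Pi.zero_apply, ofReal_zero]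
    exact ha (funext fun i => (mul_eq_zero.mp (hca i)).resolve_left hc)
  · intro hreal x
    have hsurj : Function.Surjective (Fintype.linearCombination ℝ a) := by
      by_contra h
      exact hreal (exists_im_mul_eq_zero_of_not_surjective a h)
    obtain ⟨y, hy⟩ := hsurj (I * ∑ i, a i * x i)
    refine ⟨fun i => x i + I * y i, ?_, fun i => by simp⟩
    rw [Fintype.linearCombination_apply] at hy
    calc ∑ i, a i * (x i + I * y i) = ∑ i, a i * x i + I * ∑ i, y i • a i := by
          simp only [mul_add, Finset.sum_add_distrib, Finset.mul_sum, real_smul]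
          congr 1
          exact Finset.sum_congr rfl fun i _ => by ring
      _ = 0 := by rw [hy, ← mul_assoc, I_mul_I]; ring
end

section
/- Let f : ℂⁿ → ℂ be a polynomial, let z₀ ∈ (ℂ∖{0})ⁿ with f(z₀) = 0, and suppose the vector a := (z₀₁·∂f/∂z₁(z₀), …, z₀ₙ·∂f/∂zₙ(z₀)) is nonzero. Let T := {t ∈ ℂⁿ : ∑_{i=1}^n ∂f/∂zᵢ(z₀)·tᵢ = 0}, regarded as a real subspace of ℂⁿ, and let DLog(z₀) : ℂⁿ → ℝⁿ denote the real Fréchet derivative at z₀ of the map Log(z) = (log|z₁|, …, log|zₙ|). Then DLog(z₀) maps T onto ℝⁿ if and only if there is no nonzero complex number c with c·a ∈ ℝⁿ. Equivalently: z₀ is a critical point of the restriction of Log to the smooth hypersurface V*(f) if and only if the logarithmic Gauss image γ_f(z₀) = (z₀₁∂f/∂z₁(z₀) : … : z₀ₙ∂f/∂zₙ(z₀)) is a real point of ℙ^{n−1}. -/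
/-! In the coordinates `s = t / z₀` the derivative `DLog(z₀)` is `s ↦ Re s` and `T` becomes the
hyperplane `∑ aᵢ sᵢ = 0`. Writing `s = x + i y`, a real vector `x` lifts to this hyperplane iff
`i ∑ aᵢ xᵢ` is a real combination of the `aᵢ`. That holds for every `x` as soon as two of the `aᵢ`
are `ℝ`-independent, i.e. unless all `aᵢ` lie on one real line `c⁻¹ ℝ`; in that case the nonzero
functional `x ↦ ∑ (c aᵢ) xᵢ = Re (c ∑ aᵢ sᵢ)` vanishes on the image. -/

open MvPolynomial ComplexConjugate

theorem Complex.hasFDerivAt_log_norm {p : ℂ} (hp : p ≠ 0) :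
    HasFDerivAt (fun w : ℂ => Real.log ‖w‖)
      (Complex.reCLM.comp (p⁻¹ • ContinuousLinearMap.id ℝ ℂ)) p := by
  have h := ((hasFDerivAt_id p).norm_sq.log (by simpa using hp)).const_mul (2⁻¹ : ℝ)
  have hfun : (fun w : ℂ => 2⁻¹ * Real.log (‖id w‖ ^ 2)) = fun w => Real.log ‖w‖ := by
    funext w; rw [Real.log_pow]; simp
  rw [hfun] at h
  refine h.congr_fderiv (ContinuousLinearMap.ext fun t => ?_)
  have hp' : Complex.normSq p ≠ 0 := by simpa using hp
  simp only [Complex.normSq_apply, ne_eq, id_eq, Complex.sq_norm, ContinuousLinearMap.comp_id,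
    smul_apply, coe_innerSL_apply, Complex.inner, Complex.mul_re,
    Complex.conj_re, Complex.conj_im, smul_eq_mul, nsmul_eq_mul, Nat.cast_ofNat,
    ContinuousLinearMap.comp_apply, ContinuousLinearMap.id_apply, Complex.reCLM_apply,
    Complex.inv_re, Complex.inv_im] at hp' ⊢
  field_simp

theorem hasFDerivAt_pi_log_norm {ι : Type*} [Fintype ι] {z₀ : ι → ℂ} (hz₀ : ∀ i, z₀ i ≠ 0) :
    HasFDerivAt (fun z : ι → ℂ => fun i => Real.log ‖z i‖)
      (ContinuousLinearMap.pi fun i =>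
        (Complex.reCLM.comp ((z₀ i)⁻¹ • ContinuousLinearMap.id ℝ ℂ)).comp
          (ContinuousLinearMap.proj i)) z₀ :=
  hasFDerivAt_pi.2 fun i =>
    ((Complex.hasFDerivAt_log_norm (hz₀ i)).comp z₀ (hasFDerivAt_apply (𝕜 := ℝ) i z₀) :)

theorem Complex.exists_ofReal_mul_add_ofReal_mul_eq {u v : ℂ} (h : (conj u * v).im ≠ 0) (w : ℂ) :
    ∃ x y : ℝ, u * x + v * y = w := by
  set d := (conj u * v).im with hd
  -- Cramer's rule for the real 2 × 2 system with columns `u` and `v`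
  refine ⟨(conj w * v).im / d, (conj u * w).im / d, ?_⟩
  apply Complex.ext <;>
    simp only [Complex.add_re, Complex.add_im, Complex.mul_re, Complex.mul_im,
      Complex.ofReal_re, Complex.ofReal_im] <;>
    field_simp <;>
    simp only [hd, Complex.mul_im, Complex.conj_re, Complex.conj_im] <;>
    ring

section RealPartsOfHyperplane

variable {ι : Type*} [Fintype ι] {a : ι → ℂ}

theorem exists_im_conj_mul_ne_zero (ha : a ≠ 0) (h : ¬ ∃ c : ℂ, c ≠ 0 ∧ ∀ i, (c * a i).im = 0) :
    ∃ j k, (conj (a j) * a k).im ≠ 0 := by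
  obtain ⟨j, hj⟩ := Function.ne_iff.1 ha
  by_contra! hjk
  exact h ⟨conj (a j), (map_ne_zero _).2 hj, hjk j⟩

theorem re_sum_mul_of_im_eq_zero {b s : ι → ℂ} (hb : ∀ i, (b i).im = 0) :
    (∑ i, b i * s i).re = ∑ i, (b i).re * (s i).re := by
  simp [Complex.re_sum, Complex.mul_re, hb]

theorem image_re_setOf_sum_mul_eq_zero_eq_univ {j k : ι} (hjk : (conj (a j) * a k).im ≠ 0) :
    (fun s : ι → ℂ => fun i => (s i).re) '' {s | ∑ i, a i * s i = 0} = Set.univ := by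
  classical
  refine Set.eq_univ_of_forall fun x => ?_
  set b := ∑ i, a i * (x i : ℂ)
  obtain ⟨y₁, y₂, hy⟩ := Complex.exists_ofReal_mul_add_ofReal_mul_eq hjk (Complex.I * b)
  set y : ι → ℝ := Pi.single j y₁ + Pi.single k y₂
  have hay : ∑ i, a i * (y i : ℂ) = Complex.I * b := by
    simp [y, mul_add, Finset.sum_add_distrib, Pi.single_apply, apply_ite Complex.ofReal, mul_ite,
      hy]
  refine ⟨fun i => x i + y i * Complex.I, ?_, by ext i; simp⟩
  calc ∑ i, a i * (x i + y i * Complex.I)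
      = b + (∑ i, a i * (y i : ℂ)) * Complex.I := by
        simp only [mul_add, Finset.sum_add_distrib, Finset.sum_mul, mul_assoc, b]
    _ = 0 := by rw [hay, mul_comm, ← mul_assoc, Complex.I_mul_I]; ring

theorem image_re_setOf_sum_mul_eq_zero_ne_univ {c : ℂ} (ha : a ≠ 0) (hc : c ≠ 0)
    (hca : ∀ i, (c * a i).im = 0) :
    (fun s : ι → ℂ => fun i => (s i).re) '' {s | ∑ i, a i * s i = 0} ≠ Set.univ := by
  classical
  intro hsurj
  obtain ⟨i₀, hi₀⟩ := Function.ne_iff.1 ha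
  obtain ⟨s, hs, hre⟩ := Set.eq_univ_iff_forall.1 hsurj (Pi.single i₀ 1)
  have : (c * a i₀).re = 0 := calc
    (c * a i₀).re = ∑ i, (c * a i).re * (Pi.single i₀ 1 : ι → ℝ) i := by simp [Pi.single_apply]
    _ = (∑ i, c * a i * s i).re := by rw [← hre, re_sum_mul_of_im_eq_zero hca]
    _ = (c * ∑ i, a i * s i).re := by simp only [Finset.mul_sum, mul_assoc]
    _ = 0 := by rw [show ∑ i, a i * s i = 0 from hs, mul_zero, Complex.zero_re]
  exact mul_ne_zero hc hi₀ (Complex.ext this (hca i₀))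

theorem image_re_setOf_sum_mul_eq_zero_eq_univ_iff (ha : a ≠ 0) :
    (fun s : ι → ℂ => fun i => (s i).re) '' {s | ∑ i, a i * s i = 0} = Set.univ ↔
      ¬ ∃ c : ℂ, c ≠ 0 ∧ ∀ i, (c * a i).im = 0 := by
  refine ⟨fun h ⟨c, hc, hca⟩ => image_re_setOf_sum_mul_eq_zero_ne_univ ha hc hca h, fun h => ?_⟩
  obtain ⟨j, k, hjk⟩ := exists_im_conj_mul_ne_zero ha h
  exact image_re_setOf_sum_mul_eq_zero_eq_univ hjk

end RealPartsOfHyperplane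

theorem log_critical_iff_gauss_real_general
    (n : ℕ) (f : MvPolynomial (Fin n) ℂ) (z₀ : Fin n → ℂ)
    (hz₀ : ∀ i, z₀ i ≠ 0)
    (a : Fin n → ℂ) (haDef : a = fun i => z₀ i * eval z₀ (pderiv i f)) (ha : a ≠ 0)
    (T : Set (Fin n → ℂ))
    (hT : T = {t : Fin n → ℂ | ∑ i, eval z₀ (pderiv i f) * t i = 0})
    (D : (Fin n → ℂ) →L[ℝ] (Fin n → ℝ))
    (hD : HasFDerivAt (fun z : Fin n → ℂ => fun i => Real.log ‖z i‖) D z₀) :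
    ⇑D '' T = Set.univ ↔ ¬ ∃ c : ℂ, c ≠ 0 ∧ ∀ i, (c * a i).im = 0 := by
  have hD_mul : ∀ s, D (z₀ * s) = fun i => (s i).re := fun s => by
    rw [hD.unique (hasFDerivAt_pi_log_norm hz₀)]
    ext i
    simp [inv_mul_cancel_left₀ (hz₀ i)]
  have hT' : T = (z₀ * ·) '' {s | ∑ i, a i * s i = 0} := by
    rw [Set.image_eq_preimage_of_inverse (g := (· / z₀))
      (fun s => by ext i; simp [hz₀ i]) (fun t => by ext i; simp [mul_div_cancel₀, hz₀ i]),
      hT, haDef]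
    ext t
    simp only [Set.mem_ofPred_eq, Set.mem_preimage, Pi.div_apply]
    refine Eq.congr_left (Finset.sum_congr rfl fun i _ => ?_)
    field_simp [hz₀ i]
  rw [hT', Set.image_image, funext hD_mul]
  exact image_re_setOf_sum_mul_eq_zero_eq_univ_iff ha

/-- Let `f` be a polynomial, `z₀ ∈ (ℂ∖{0})ⁿ` with `f(z₀) = 0` and
`a = (z₀ᵢ ∂f/∂zᵢ(z₀))ᵢ ≠ 0`.  Let `T = ker(df(z₀))` be the complex tangent space and let
`D = DLog(z₀)` be the real Fréchet derivative at `z₀` of `Log z = (log|z₁|,…,log|zₙ|)`.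
Then `D` maps `T` onto `ℝⁿ` iff there is no nonzero `c ∈ ℂ` with `c·a ∈ ℝⁿ`; i.e. `z₀` is a
critical point of `Log|_{V*(f)}` iff the logarithmic Gauss image `γ_f(z₀)` is real. -/
theorem log_critical_iff_gauss_real
    (n : ℕ) (f : MvPolynomial (Fin n) ℂ) (z₀ : Fin n → ℂ)
    (hz₀ : ∀ i, z₀ i ≠ 0) (hf : eval z₀ f = 0)
    (a : Fin n → ℂ) (haDef : a = fun i => z₀ i * eval z₀ (pderiv i f)) (ha : a ≠ 0)
    (T : Set (Fin n → ℂ))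
    (hT : T = {t : Fin n → ℂ | ∑ i, eval z₀ (pderiv i f) * t i = 0})
    (D : (Fin n → ℂ) →L[ℝ] (Fin n → ℝ))
    (hD : HasFDerivAt (fun z : Fin n → ℂ => fun i => Real.log ‖z i‖) D z₀) :
    ⇑D '' T = Set.univ ↔ ¬ ∃ c : ℂ, c ≠ 0 ∧ ∀ i, (c * a i).im = 0 :=
  log_critical_iff_gauss_real_general n f z₀ hz₀ a haDef ha T hT D hD
end

section
/- Let f : ℂⁿ → ℂ be a polynomial, let z₀ ∈ (ℂ∖{0})ⁿ with f(z₀) = 0 and ∂f/∂zₙ(z₀) ≠ 0. Let U be an open neighbourhood of z₀' := (z₀₁,…,z₀,n−1) in ℂ^{n−1} and let g : U → ℂ∖{0} be a holomorphic function with g(z₀') = z₀ₙ and f(z', g(z')) = 0 for all z' ∈ U. Then for every y ∈ ℂⁿ the following are equivalent: (i) yᵢ/z₀ᵢ + yₙ·(∂g/∂zᵢ(z₀'))/g(z₀') = 0 for all i = 1,…,n−1; (ii) yₙ·z₀ᵢ·∂f/∂zᵢ(z₀) = yᵢ·z₀ₙ·∂f/∂zₙ(z₀) for all i = 1,…,n−1.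 In other words, z₀ is a critical point of the phase function φ_y(z) = ⟨y, log z⟩ restricted to V*(f) if and only if (z₀, y) lies on the graph of the logarithmic Gauss map, i.e. γ_f(z₀) = (y₁ : … : yₙ). -/
/-!
Differentiating `f (z', g z') ≡ 0` at `z₀'` gives `∂ᵢf(z₀) + ∂ₙf(z₀) · ∂ᵢg(z₀') = 0`, so
`∂ᵢg(z₀') = -∂ᵢf(z₀) / ∂ₙf(z₀)`. Substituting this into (i) and clearing the nonzero
denominators `z₀ᵢ`, `z₀ₙ` and `∂ₙf(z₀)` turns (i) into (ii).
-/

open MvPolynomial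

open ContinuousLinearMap Filter Topology

section

variable {𝕜 : Type*} [NontriviallyNormedField 𝕜]

theorem HasFDerivAt.finSnoc {E F : Type*} [NormedAddCommGroup E] [NormedSpace 𝕜 E]
    [NormedAddCommGroup F] [NormedSpace 𝕜 F] {n : ℕ} {f : E → Fin n → F} {g : E → F}
    {f' : E →L[𝕜] Fin n → F} {g' : E →L[𝕜] F} {x : E}
    (hf : HasFDerivAt f f' x) (hg : HasFDerivAt g g' x) :
    HasFDerivAt (fun z => Fin.snoc (f z) (g z) : E → Fin (n + 1) → F)
      (pi (Fin.snoc (fun k => (proj k).comp f') g')) x := by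
  refine hasFDerivAt_pi'.2 fun j => ?_
  induction j using Fin.lastCases with
  | last => simpa using hg
  | cast k => simpa using hasFDerivAt_pi'.1 hf k

namespace MvPolynomial

theorem hasFDerivAt_eval {σ : Type*} [Fintype σ] [DecidableEq σ] (p : MvPolynomial σ 𝕜)
    (x : σ → 𝕜) :
    HasFDerivAt (fun z => eval z p)
      (∑ j, eval x (pderiv j p) • (proj j : (σ → 𝕜) →L[𝕜] 𝕜)) x := by
  induction p using MvPolynomial.induction_on with
  | C a =>
    refine (hasFDerivAt_const a x).congr_fderiv ?_
      |>.congr_of_eventuallyEq (.of_forall fun z => ?_)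
    · ext v
      simp
    · simp
  | add p q hp hq =>
    refine (hp.add hq).congr_fderiv ?_ |>.congr_of_eventuallyEq (.of_forall fun z => ?_)
    · ext v
      simp [Finset.sum_add_distrib, add_mul]
    · simp
  | mul_X p j hp =>
    refine (hp.mul (hasFDerivAt_apply j x)).congr_fderiv ?_
      |>.congr_of_eventuallyEq (.of_forall fun z => ?_)
    · ext v
      simp [pderiv_X, Pi.single_apply, Finset.sum_add_distrib, add_mul, Finset.mul_sum, apply_ite,
        ite_mul, mul_assoc]
    · simp

theorem eval_pderiv_castSucc_add_mul_fderiv_eq_zero {n : ℕ} (f : MvPolynomial (Fin (n + 1)) 𝕜)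
    {g : (Fin n → 𝕜) → 𝕜} {x : Fin n → 𝕜} (hg : DifferentiableAt 𝕜 g x)
    (himpl : ∀ᶠ z in 𝓝 x, eval (Fin.snoc z (g z)) f = 0) (i : Fin n) :
    eval (Fin.snoc x (g x)) (pderiv i.castSucc f)
      + eval (Fin.snoc x (g x)) (pderiv (Fin.last n) f) * fderiv 𝕜 g x (Pi.single i 1) = 0 := by
  have hcomp := (hasFDerivAt_eval f _).comp x ((hasFDerivAt_id x).finSnoc hg.hasFDerivAt)
  have hzero := hcomp.unique ((hasFDerivAt_const 0 x).congr_of_eventuallyEq himpl)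
  simpa [Fin.sum_univ_castSucc, Pi.single_apply] using DFunLike.congr_fun hzero (Pi.single i 1)

end MvPolynomial

end

theorem phase_critical_iff_gauss_graph_general
    (n : ℕ) (f : MvPolynomial (Fin (n + 1)) ℂ) (z₀ : Fin (n + 1) → ℂ)
    (hz₀ : ∀ i, z₀ i ≠ 0)
    (hfn : eval z₀ (pderiv (Fin.last n) f) ≠ 0)
    (z₀' : Fin n → ℂ) (hz₀' : z₀' = fun i => z₀ i.castSucc)
    (U : Set (Fin n → ℂ)) (hU : IsOpen U) (hmem : z₀' ∈ U)
    (g : (Fin n → ℂ) → ℂ) (hg : DifferentiableOn ℂ g U)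
    (hgz₀ : g z₀' = z₀ (Fin.last n))
    (himpl : ∀ z' ∈ U, eval (Fin.snoc z' (g z')) f = 0)
    (y : Fin (n + 1) → ℂ) :
    (∀ i : Fin n,
        y i.castSucc / z₀ i.castSucc
          + y (Fin.last n) * fderiv ℂ g z₀' (Pi.single i 1) / g z₀' = 0)
      ↔ (∀ i : Fin n,
        y (Fin.last n) * z₀ i.castSucc * eval z₀ (pderiv i.castSucc f)
          = y i.castSucc * z₀ (Fin.last n) * eval z₀ (pderiv (Fin.last n) f)) := by
  have hsnoc : Fin.snoc z₀' (g z₀') = z₀ := by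
    rw [hgz₀, hz₀']
    exact Fin.snoc_init_self z₀
  have hnhds : U ∈ 𝓝 z₀' := hU.mem_nhds hmem
  have himplicit := eval_pderiv_castSucc_add_mul_fderiv_eq_zero f (hg.differentiableAt hnhds)
    (eventually_of_mem hnhds himpl)
  rw [hsnoc] at himplicit
  refine forall_congr' fun i => ?_
  have hderiv : fderiv ℂ g z₀' (Pi.single i 1)
      = -eval z₀ (pderiv i.castSucc f) / eval z₀ (pderiv (Fin.last n) f) := by
    rw [eq_div_iff hfn]
    linear_combination himplicit i
  rw [hderiv, hgz₀]
  field_simp [hz₀ i.castSucc, hz₀ (Fin.last n)]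
  constructor <;> intro h <;> linear_combination -h

/-- Let `f` be a polynomial in `n+1` variables, `z₀` a point of the torus with
`f(z₀) = 0` and `∂f/∂z_{n+1}(z₀) ≠ 0`, and let `g` be a holomorphic implicit function on a
neighbourhood `U` of `z₀' = (z₀₁,…,z₀ₙ)` with values in `ℂ∖{0}`, `g(z₀') = z₀_{n+1}` and
`f(z', g(z')) = 0` on `U`.  Then for every `y ∈ ℂ^{n+1}` the following are equivalent:
(i) `yᵢ/z₀ᵢ + y_{n+1}·(∂g/∂zᵢ(z₀'))/g(z₀') = 0` for all `i ≤ n`;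
(ii) `y_{n+1}·z₀ᵢ·∂f/∂zᵢ(z₀) = yᵢ·z₀_{n+1}·∂f/∂z_{n+1}(z₀)` for all `i ≤ n`.
I.e. `z₀` is a critical point of the phase function `φ_y = ⟨y, log z⟩` on `V*(f)` iff
`(z₀, y)` lies on the graph of the logarithmic Gauss map. -/
theorem phase_critical_iff_gauss_graph
    (n : ℕ) (f : MvPolynomial (Fin (n + 1)) ℂ) (z₀ : Fin (n + 1) → ℂ)
    (hz₀ : ∀ i, z₀ i ≠ 0) (hf : eval z₀ f = 0)
    (hfn : eval z₀ (pderiv (Fin.last n) f) ≠ 0)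
    (z₀' : Fin n → ℂ) (hz₀' : z₀' = fun i => z₀ i.castSucc)
    (U : Set (Fin n → ℂ)) (hU : IsOpen U) (hmem : z₀' ∈ U)
    (g : (Fin n → ℂ) → ℂ) (hg : DifferentiableOn ℂ g U)
    (hgne : ∀ z' ∈ U, g z' ≠ 0) (hgz₀ : g z₀' = z₀ (Fin.last n))
    (himpl : ∀ z' ∈ U, eval (Fin.snoc z' (g z')) f = 0)
    (y : Fin (n + 1) → ℂ) :
    (∀ i : Fin n,
        y i.castSucc / z₀ i.castSucc
          + y (Fin.last n) * fderiv ℂ g z₀' (Pi.single i 1) / g z₀' = 0)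
      ↔ (∀ i : Fin n,
        y (Fin.last n) * z₀ i.castSucc * eval z₀ (pderiv i.castSucc f)
          = y i.castSucc * z₀ (Fin.last n) * eval z₀ (pderiv (Fin.last n) f)) :=
  phase_critical_iff_gauss_graph_general n f z₀ hz₀ hfn z₀' hz₀' U hU hmem g hg hgz₀ himpl y
end

section
/- Let f : ℂⁿ → ℂ be a polynomial, z₀ ∈ (ℂ∖{0})ⁿ with f(z₀) = 0 and ∂f/∂zₙ(z₀) ≠ 0, let g be a holomorphic function on a neighbourhood of z₀' := (z₀₁,…,z₀,n−1) with values in ℂ∖{0}, g(z₀') = z₀ₙ and f(z', g(z')) ≡ 0. Let y ∈ ℂⁿ satisfy the criticality condition yᵢ/z₀ᵢ = −yₙ·(∂g/∂zᵢ(z₀'))/g(z₀') for all i = 1,…,n−1. Define Lᵢⱼ := (g(z₀')·∂²g/∂zᵢ∂zⱼ(z₀') − ∂g/∂zᵢ(z₀')·∂g/∂zⱼ(z₀'))/g(z₀')² (the second logarithmic derivatives of g). Then the (n−1)×(n−1) matrices H with entries Hᵢⱼ := yₙ·Lᵢⱼ − δᵢⱼ·yᵢ/z₀ᵢ² (the Hessian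 of the phase function φ_y at z₀) and J with entries Jᵢⱼ := −(z₀ᵢ·Lᵢⱼ + δᵢⱼ·(∂g/∂zⱼ(z₀'))/g(z₀')) (the Jacobian matrix of the logarithmic Gauss map in the affine chart) satisfy H = D·J, where D is the invertible diagonal matrix with diagonal entries dᵢ = −yₙ/z₀ᵢ (assuming yₙ ≠ 0). -/
open MvPolynomial Matrix

/-- The criticality condition turns the diagonal term `wᵢ / zᵢ²` of the Hessian into
`-c vᵢ / zᵢ`, which is exactly what `diagonal (-c / z)` makes of the diagonal term of the
Jacobian. -/
theorem of_mul_sub_ite_eq_diagonal_mul {K ι : Type*} [Field K] [Fintype ι] [DecidableEq ι]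
    (c : K) (z w v : ι → K) (L : Matrix ι ι K) (hz : ∀ i, z i ≠ 0)
    (hcrit : ∀ i, w i / z i = -c * v i) :
    (Matrix.of fun i j => c * L i j - if i = j then w i / z i ^ 2 else 0) =
      diagonal (fun i => -c / z i) *
        Matrix.of fun i j => -(z i * L i j + if i = j then v j else 0) := by
  ext i j
  rw [diagonal_mul, of_apply, of_apply]
  split_ifs with hij
  · subst hij
    have hw : w i / z i ^ 2 = -c * v i / z i := by rw [sq, ← div_div, hcrit]
    rw [hw]
    field_simp [hz i]
    ring
  · field_simp [hz i]
    ring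

theorem hessian_eq_diagonal_mul_jacobian_general
    (n : ℕ) (z₀ : Fin (n + 1) → ℂ)
    (hz₀ : ∀ i, z₀ i ≠ 0)
    (z₀' : Fin n → ℂ)
    (g : (Fin n → ℂ) → ℂ)
    (y : Fin (n + 1) → ℂ) (hyn : y (Fin.last n) ≠ 0)
    (gd : Fin n → ℂ)
    (hcrit : ∀ i : Fin n,
      y i.castSucc / z₀ i.castSucc = -(y (Fin.last n)) * gd i / g z₀')
    (L : Fin n → Fin n → ℂ)
    (H : Matrix (Fin n) (Fin n) ℂ)
    (hH : H = Matrix.of fun i j =>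
      y (Fin.last n) * L i j
        - (if i = j then y i.castSucc / (z₀ i.castSucc) ^ 2 else 0))
    (J : Matrix (Fin n) (Fin n) ℂ)
    (hJ : J = Matrix.of fun i j =>
      -(z₀ i.castSucc * L i j + (if i = j then gd j / g z₀' else 0)))
    (D : Matrix (Fin n) (Fin n) ℂ)
    (hD : D = Matrix.diagonal fun i => -(y (Fin.last n)) / z₀ i.castSucc) :
    H = D * J ∧ IsUnit D.det := by
  subst hH hJ hD
  refine ⟨of_mul_sub_ite_eq_diagonal_mul _ (fun i => z₀ i.castSucc) (fun i => y i.castSucc)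
    (fun j => gd j / g z₀') L (fun i => hz₀ _) fun i => by rw [hcrit, mul_div_assoc], ?_⟩
  rw [det_diagonal]
  exact (Finset.prod_ne_zero_iff.mpr fun i _ => div_ne_zero (neg_ne_zero.mpr hyn) (hz₀ _)).isUnit

/-- Under the implicit-function setup for `V*(f)` near `z₀`
(`f(z₀) = 0`, `∂f/∂z_{n+1}(z₀) ≠ 0`, `g` holomorphic with `f(z', g(z')) ≡ 0`), and the
criticality condition `yᵢ/z₀ᵢ = −y_{n+1}·gᵢ(z₀')/g(z₀')`, with
`Lᵢⱼ = (g·gᵢⱼ − gᵢ·gⱼ)/g²` the second logarithmic derivatives of `g`, the Hessian matrix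
`Hᵢⱼ = y_{n+1}·Lᵢⱼ − δᵢⱼ·yᵢ/z₀ᵢ²` of the phase function `φ_y` at `z₀` and the Jacobian matrix
`Jᵢⱼ = −(z₀ᵢ·Lᵢⱼ + δᵢⱼ·gⱼ/g)` of the logarithmic Gauss map in the affine chart satisfy
`H = D·J` with `D` the invertible diagonal matrix with entries `dᵢ = −y_{n+1}/z₀ᵢ`
(assuming `y_{n+1} ≠ 0`). -/
theorem hessian_eq_diagonal_mul_jacobian
    (n : ℕ) (f : MvPolynomial (Fin (n + 1)) ℂ) (z₀ : Fin (n + 1) → ℂ)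
    (hz₀ : ∀ i, z₀ i ≠ 0) (hf : eval z₀ f = 0)
    (hfn : eval z₀ (pderiv (Fin.last n) f) ≠ 0)
    (z₀' : Fin n → ℂ) (hz₀' : z₀' = fun i => z₀ i.castSucc)
    (U : Set (Fin n → ℂ)) (hU : IsOpen U) (hmem : z₀' ∈ U)
    (g : (Fin n → ℂ) → ℂ) (hg : DifferentiableOn ℂ g U)
    (hgne : ∀ z' ∈ U, g z' ≠ 0) (hgz₀ : g z₀' = z₀ (Fin.last n))
    (himpl : ∀ z' ∈ U, eval (Fin.snoc z' (g z')) f = 0)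
    (y : Fin (n + 1) → ℂ) (hyn : y (Fin.last n) ≠ 0)
    (gd : Fin n → ℂ) (hgd : gd = fun i => fderiv ℂ g z₀' (Pi.single i 1))
    (gdd : Fin n → Fin n → ℂ)
    (hgdd : gdd = fun i j =>
      fderiv ℂ (fun w => fderiv ℂ g w (Pi.single j 1)) z₀' (Pi.single i 1))
    (hcrit : ∀ i : Fin n,
      y i.castSucc / z₀ i.castSucc = -(y (Fin.last n)) * gd i / g z₀')
    (L : Fin n → Fin n → ℂ)
    (hL : L = fun i j => (g z₀' * gdd i j - gd i * gd j) / (g z₀') ^ 2)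
    (H : Matrix (Fin n) (Fin n) ℂ)
    (hH : H = Matrix.of fun i j =>
      y (Fin.last n) * L i j
        - (if i = j then y i.castSucc / (z₀ i.castSucc) ^ 2 else 0))
    (J : Matrix (Fin n) (Fin n) ℂ)
    (hJ : J = Matrix.of fun i j =>
      -(z₀ i.castSucc * L i j + (if i = j then gd j / g z₀' else 0)))
    (D : Matrix (Fin n) (Fin n) ℂ)
    (hD : D = Matrix.diagonal fun i => -(y (Fin.last n)) / z₀ i.castSucc) :
    H = D * J ∧ IsUnit D.det :=
  hessian_eq_diagonal_mul_jacobian_general n z₀ hz₀ z₀' g y hyn gd hcrit L H hH J hJ D hD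
end

section
/- Let a ∈ ℂ with a ≠ 1/27, and let f(z₁,z₂) = z₁²z₂ + z₁z₂² − z₁z₂ + a. Then the curve V*(f) is smooth in the torus: there is no point (z₁,z₂) ∈ (ℂ∖{0})² with f(z₁,z₂) = 0, ∂f/∂z₁(z₁,z₂) = 0 and ∂f/∂z₂(z₁,z₂) = 0. -/
/-! Dividing the two critical-point equations by the nonzero coordinates leaves the linear
system `2 z₁ + z₂ = 1`, `z₁ + 2 z₂ = 1`, whose only solution is `z₁ = z₂ = 1/3`; there
`f = a - 1/27`. -/

section Derivatives

variable {𝕜 : Type*} [NontriviallyNormedField 𝕜]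

theorem deriv_cubic_fst (c a z : 𝕜) :
    deriv (fun w : 𝕜 => w ^ 2 * c + w * c ^ 2 - w * c + a) z = 2 * z * c + c ^ 2 - c := by
  have h := ((((hasDerivAt_pow 2 z).mul_const c).add
    ((hasDerivAt_id z).mul_const (c ^ 2))).sub ((hasDerivAt_id z).mul_const c)).add_const a
  exact (h.congr_deriv (by simp)).deriv

theorem deriv_cubic_snd (c a z : 𝕜) :
    deriv (fun w : 𝕜 => c ^ 2 * w + c * w ^ 2 - c * w + a) z = c ^ 2 + 2 * c * z - c := by
  have h := ((((hasDerivAt_id z).const_mul (c ^ 2)).add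
    ((hasDerivAt_pow 2 z).const_mul c)).sub ((hasDerivAt_id z).const_mul c)).add_const a
  refine (h.congr_deriv ?_).deriv
  simp only [mul_one, Nat.cast_ofNat, pow_one, Nat.add_one_sub_one]
  ring

end Derivatives

theorem critical_point_eq_third {K : Type*} [Field K] [CharZero K] {z₁ z₂ : K}
    (h₁ : z₁ ≠ 0) (h₂ : z₂ ≠ 0) (hd₁ : 2 * z₁ * z₂ + z₂ ^ 2 - z₂ = 0)
    (hd₂ : z₁ ^ 2 + 2 * z₁ * z₂ - z₁ = 0) : z₁ = 1 / 3 ∧ z₂ = 1 / 3 := by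
  have e₁ : 2 * z₁ + z₂ - 1 = 0 :=
    (mul_eq_zero.mp (by linear_combination hd₁ : z₂ * (2 * z₁ + z₂ - 1) = 0)).resolve_left h₂
  have e₂ : z₁ + 2 * z₂ - 1 = 0 :=
    (mul_eq_zero.mp (by linear_combination hd₂ : z₁ * (z₁ + 2 * z₂ - 1) = 0)).resolve_left h₁
  exact ⟨by linear_combination (2 * e₁ - e₂) / 3, by linear_combination (2 * e₂ - e₁) / 3⟩

/-- For `a ∈ ℂ`, `a ≠ 1/27`, the curve
`f(z₁,z₂) = z₁²z₂ + z₁z₂² − z₁z₂ + a` is smooth in the torus: there is no point of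
`(ℂ∖{0})²` where `f` and both partial derivatives `∂f/∂z₁`, `∂f/∂z₂` vanish. -/
theorem example_cubic_smooth_in_torus (a : ℂ) (ha : a ≠ 1 / 27) :
    ¬ ∃ z₁ z₂ : ℂ, z₁ ≠ 0 ∧ z₂ ≠ 0 ∧
      z₁ ^ 2 * z₂ + z₁ * z₂ ^ 2 - z₁ * z₂ + a = 0 ∧
      deriv (fun w : ℂ => w ^ 2 * z₂ + w * z₂ ^ 2 - w * z₂ + a) z₁ = 0 ∧
      deriv (fun w : ℂ => z₁ ^ 2 * w + z₁ * w ^ 2 - z₁ * w + a) z₂ = 0 := by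
  rintro ⟨z₁, z₂, h₁, h₂, hf, hd₁, hd₂⟩
  rw [deriv_cubic_fst] at hd₁
  rw [deriv_cubic_snd] at hd₂
  obtain ⟨rfl, rfl⟩ := critical_point_eq_third h₁ h₂ hd₁ hd₂
  exact ha (by linear_combination hf)
end

section
/- For a real parameter a, let D_a(λ) = 4aλ⁶ − 12aλ⁵ + (1−3a)λ⁴ − 2(1−13a)λ³ + (1−3a)λ² − 12aλ + 4a ∈ ℝ[λ]. Then: (i) if a < 0, every complex root of D_a is real, i.e. D_a has six real roots counted with multiplicity; (ii) if 0 < a < 1/27 or a > 1/27, then D_a has no real roots. -/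
/-!
`D_a(λ) = (λ² - λ)² + a P(λ)²` with `P(λ) = (λ + 1)(λ - 2)(2λ - 1)`. For `a > 0` both squares
would have to vanish, but `λ² - λ` and `P` have no common real root. For `a = -b² < 0` the sextic
splits into the real cubics `b P ± (λ² - λ)`, each of which has positive leading coefficient and
changes sign from `2b` at `0` to `-2b` at `1`. A real cubic with a nonreal root `w` factors over `ℝ`
as a linear factor times the positive quadratic `|λ - w|²`, so it changes sign only once, from
negative to positive; hence these cubics have only real roots.
-/

theorem Complex.cubic_eq_mul_of_nonreal_root {c₃ c₂ c₁ c₀ : ℝ} {w : ℂ}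
    (hw : (c₃ : ℂ) * w ^ 3 + c₂ * w ^ 2 + c₁ * w + c₀ = 0) (him : w.im ≠ 0) (x : ℝ) :
    c₃ * x ^ 3 + c₂ * x ^ 2 + c₁ * x + c₀
      = (c₃ * x + c₂ + 2 * c₃ * w.re) * ((x - w.re) ^ 2 + w.im ^ 2) := by
  have hre := congrArg Complex.re hw
  have him' := congrArg Complex.im hw
  simp only [Complex.add_re, Complex.add_im, Complex.mul_re, Complex.mul_im, Complex.ofReal_re,
    Complex.ofReal_im, Complex.zero_re, Complex.zero_im, pow_succ, pow_zero, one_mul] at hre him'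
  have hlin : c₃ * (3 * w.re ^ 2 - w.im ^ 2) + 2 * c₂ * w.re + c₁ = 0 :=
    mul_left_cancel₀ him (by linear_combination him')
  linear_combination hre + (x - w.re) * hlin

theorem Complex.im_eq_zero_of_cubic_root_of_sign_change {c₃ c₂ c₁ c₀ x₀ x₁ : ℝ}
    (hc₃ : 0 ≤ c₃) (hx : x₀ ≤ x₁) (h₀ : 0 < c₃ * x₀ ^ 3 + c₂ * x₀ ^ 2 + c₁ * x₀ + c₀)
    (h₁ : c₃ * x₁ ^ 3 + c₂ * x₁ ^ 2 + c₁ * x₁ + c₀ < 0) {w : ℂ}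
    (hw : (c₃ : ℂ) * w ^ 3 + c₂ * w ^ 2 + c₁ * w + c₀ = 0) : w.im = 0 := by
  by_contra him
  rw [Complex.cubic_eq_mul_of_nonreal_root hw him] at h₀ h₁
  have hq : ∀ x : ℝ, 0 < (x - w.re) ^ 2 + w.im ^ 2 := fun x => by positivity
  have hlin₀ := pos_of_mul_pos_left h₀ (hq x₀).le
  have hlin₁ := neg_of_mul_neg_left h₁ (hq x₁).le
  nlinarith

theorem im_eq_zero_of_root_of_cubic_of_pos {b e : ℝ} (hb : 0 < b) {w : ℂ}
    (hw : 2 * (b : ℂ) * w ^ 3 + (e - 3 * b) * w ^ 2 - (3 * b + e) * w + 2 * b = 0) :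
    w.im = 0 := by
  refine Complex.im_eq_zero_of_cubic_root_of_sign_change (c₃ := 2 * b) (c₂ := e - 3 * b)
    (c₁ := -(3 * b + e)) (c₀ := 2 * b) (x₀ := 0) (x₁ := 1) (by positivity) zero_le_one
    (by linarith) (by linarith) ?_
  push_cast
  linear_combination hw

theorem sextic_eq_sq_add_mul_sq {R : Type*} [CommRing R] (a x : R) :
    4 * a * x ^ 6 - 12 * a * x ^ 5 + (1 - 3 * a) * x ^ 4 - 2 * (1 - 13 * a) * x ^ 3
        + (1 - 3 * a) * x ^ 2 - 12 * a * x + 4 * a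
      = (x ^ 2 - x) ^ 2 + a * ((x + 1) * (x - 2) * (2 * x - 1)) ^ 2 := by
  ring

theorem sq_add_mul_sq_ne_zero {a : ℝ} (ha : 0 < a) (x : ℝ) :
    (x ^ 2 - x) ^ 2 + a * ((x + 1) * (x - 2) * (2 * x - 1)) ^ 2 ≠ 0 := by
  intro h
  obtain ⟨hq, hP⟩ := (add_eq_zero_iff_of_nonneg (sq_nonneg _) (by positivity)).1 h
  have hq : x ^ 2 - x = 0 := pow_eq_zero_iff two_ne_zero |>.1 hq
  have hP : (x + 1) * (x - 2) * (2 * x - 1) = 0 :=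
    pow_eq_zero_iff two_ne_zero |>.1 ((mul_eq_zero.1 hP).resolve_left ha.ne')
  have hx : x = 1 / 2 := by linear_combination (-(1 : ℝ) / 4) * (hP - (2 * x - 1) * hq)
  norm_num [hx] at hq

/-- For a real parameter `a` let
`D_a(λ) = 4aλ⁶ − 12aλ⁵ + (1−3a)λ⁴ − 2(1−13a)λ³ + (1−3a)λ² − 12aλ + 4a`.  Then:
(i) if `a < 0`, every complex root of `D_a` is real;
(ii) if `0 < a < 1/27` or `a > 1/27`, then `D_a` has no real roots. -/
theorem discriminant_sextic_real_roots (a : ℝ) :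
    (a < 0 → ∀ w : ℂ,
      4 * (a : ℂ) * w ^ 6 - 12 * (a : ℂ) * w ^ 5 + (1 - 3 * (a : ℂ)) * w ^ 4
          - 2 * (1 - 13 * (a : ℂ)) * w ^ 3 + (1 - 3 * (a : ℂ)) * w ^ 2
          - 12 * (a : ℂ) * w + 4 * (a : ℂ) = 0 → w.im = 0) ∧
    (((0 < a ∧ a < 1 / 27) ∨ 1 / 27 < a) → ∀ x : ℝ,
      4 * a * x ^ 6 - 12 * a * x ^ 5 + (1 - 3 * a) * x ^ 4
          - 2 * (1 - 13 * a) * x ^ 3 + (1 - 3 * a) * x ^ 2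
          - 12 * a * x + 4 * a ≠ 0) := by
  constructor
  · intro ha w hw
    obtain ⟨b, hb, rfl⟩ : ∃ b, 0 < b ∧ a = -b ^ 2 :=
      ⟨√(-a), Real.sqrt_pos.2 (neg_pos.2 ha), by rw [Real.sq_sqrt (neg_pos.2 ha).le, neg_neg]⟩
    rw [sextic_eq_sq_add_mul_sq] at hw
    have hsplit : (2 * (b : ℂ) * w ^ 3 + (1 - 3 * b) * w ^ 2 - (3 * b + 1) * w + 2 * b)
        * (2 * (b : ℂ) * w ^ 3 + (-1 - 3 * b) * w ^ 2 - (3 * b - 1) * w + 2 * b) = 0 := by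
      push_cast at hw
      linear_combination -hw
    rcases mul_eq_zero.1 hsplit with h | h
    · exact im_eq_zero_of_root_of_cubic_of_pos (e := 1) hb (by exact_mod_cast h)
    · exact im_eq_zero_of_root_of_cubic_of_pos (e := -1) hb (by push_cast; linear_combination h)
  · intro ha x
    rw [sextic_eq_sq_add_mul_sq]
    exact sq_add_mul_sq_ne_zero (by rcases ha with ⟨ha, -⟩ | ha <;> linarith) x
end

section
/- Let f(z₁,z₂) = z₁²z₂ + z₁z₂² − z₁z₂ + a with real parameter a, and let A_f ⊆ ℝ² be its amoeba. If 0 < a < 1/27, then ℝ² ∖ A_f has a nonempty bounded connected component; if a > 1/27, then every nonempty connected component of ℝ² ∖ A_f is unbounded. -/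
/-!
Write `f = a - z₁ z₂ (1 - z₁ - z₂)`.

For `0 < a < 1/27` the torus `‖z₁‖ = ‖z₂‖ = 1/3` misses `V(f)`, since there
`‖z₁ z₂ (1 - z₁ - z₂)‖ ≥ 1/27`. At positive real points `f` is real, so the amoeba contains the
zero set of `e^{x₁} e^{x₂} (1 - e^{x₁} - e^{x₂}) - a`; the component of `(log ⅓, log ⅓)` therefore
stays in the bounded region where this function is positive.

For `a > 1/27` fix `x` off the amoeba and `r = e^{x₁}`. As `w` runs over the circle
`‖w‖ = e^{x₂}`, the two roots `u, v` of `f(·, w)` never reach `‖z‖ = r`, so the quantity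
`(‖u‖² - r²)(‖v‖² - r²)`, continuous in the coefficients, keeps its sign. If it is positive the
roots stay on one side of `‖z‖ = r` and the horizontal ray from `x` towards the other side misses
the amoeba. If it is negative at `w = e^{x₂}`, two real roots straddle `r`, which for `a > 1/27`
forces `e^{x₂} > e^{x₁} + 1`. This cannot happen in both coordinate directions, so some
axis-parallel ray from `x` avoids the amoeba.
-/

open Bornology Metric Set

def logAmoeba (g : ℂ → ℂ → ℂ) : Set (ℝ × ℝ) :=
  {x | ∃ z₁ z₂ : ℂ, z₁ ≠ 0 ∧ z₂ ≠ 0 ∧ g z₁ z₂ = 0 ∧ x = (Real.log ‖z₁‖, Real.log ‖z₂‖)}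

theorem mem_logAmoeba_iff {g : ℂ → ℂ → ℂ} {x : ℝ × ℝ} :
    x ∈ logAmoeba g ↔ ∃ z₁ z₂ : ℂ, ‖z₁‖ = Real.exp x.1 ∧ ‖z₂‖ = Real.exp x.2 ∧ g z₁ z₂ = 0 := by
  constructor
  · rintro ⟨z₁, z₂, h₁, h₂, hg, rfl⟩
    exact ⟨z₁, z₂, (Real.exp_log (norm_pos_iff.2 h₁)).symm,
      (Real.exp_log (norm_pos_iff.2 h₂)).symm, hg⟩
  · rintro ⟨z₁, z₂, h₁, h₂, hg⟩
    refine ⟨z₁, z₂, norm_pos_iff.1 (h₁ ▸ Real.exp_pos _), norm_pos_iff.1 (h₂ ▸ Real.exp_pos _),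
      hg, ?_⟩
    rw [h₁, h₂, Real.log_exp, Real.log_exp]

theorem swap_mem_logAmoeba_iff {g : ℂ → ℂ → ℂ} (hg : ∀ z₁ z₂, g z₁ z₂ = g z₂ z₁) {x : ℝ × ℝ} :
    x.swap ∈ logAmoeba g ↔ x ∈ logAmoeba g := by
  simp only [mem_logAmoeba_iff, Prod.fst_swap, Prod.snd_swap]
  exact ⟨fun ⟨z₁, z₂, h₁, h₂, h⟩ => ⟨z₂, z₁, h₂, h₁, hg z₁ z₂ ▸ h⟩,
    fun ⟨z₁, z₂, h₁, h₂, h⟩ => ⟨z₂, z₁, h₂, h₁, hg z₁ z₂ ▸ h⟩⟩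

theorem IsPreconnected.pos_of_pos {X : Type*} [TopologicalSpace X] {s : Set X}
    (hs : IsPreconnected s) {g : X → ℝ} (hg : ContinuousOn g s) (hne : ∀ y ∈ s, g y ≠ 0)
    {x : X} (hx : x ∈ s) (hgx : 0 < g x) {y : X} (hy : y ∈ s) : 0 < g y := by
  by_contra! hgy
  obtain ⟨z, hz, hz0⟩ := hs.intermediate_value hy hx hg ⟨hgy, hgx.le⟩
  exact hne z hz hz0

theorem not_isBounded_connectedComponentIn_of_ray {E : Type*} [NormedAddCommGroup E]
    [NormedSpace ℝ E] {s : Set E} {x v : E} (hv : v ≠ 0) (hray : ∀ t : ℝ, 0 ≤ t → x + t • v ∈ s) :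
    ¬ IsBounded (connectedComponentIn s x) := by
  intro hb
  have hsub : (fun t : ℝ => x + t • v) '' Ici 0 ⊆ connectedComponentIn s x :=
    (isPreconnected_Ici.image _ (by fun_prop)).subset_connectedComponentIn
      ⟨0, self_mem_Ici, by simp⟩ (by rintro _ ⟨t, ht, rfl⟩; exact hray t ht)
  obtain ⟨R, hR⟩ := (hb.subset hsub).subset_closedBall x
  have hv' : 0 < ‖v‖ := norm_pos_iff.2 hv
  set t := (|R| + 1) / ‖v‖
  have ht : 0 ≤ t := by positivity
  have hmem := mem_closedBall.1 (hR ⟨t, ht, rfl⟩)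
  rw [dist_eq_norm, add_sub_cancel_left, norm_smul, Real.norm_of_nonneg ht,
    div_mul_cancel₀ _ hv'.ne'] at hmem
  linarith [le_abs_self R]

theorem not_isBounded_connectedComponentIn_compl {A : Set (ℝ × ℝ)} {x : ℝ × ℝ}
    (h : (∀ y ∈ A, y.2 = x.2 → y.1 < x.1) ∨ (∀ y ∈ A, y.2 = x.2 → x.1 < y.1) ∨
      (∀ y ∈ A, y.1 = x.1 → y.2 < x.2) ∨ (∀ y ∈ A, y.1 = x.1 → x.2 < y.2)) :
    ¬ IsBounded (connectedComponentIn Aᶜ x) := by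
  rcases h with h | h | h | h
  · exact not_isBounded_connectedComponentIn_of_ray (v := (1, 0)) (by simp) fun t ht hy =>
      ht.not_gt (by simpa using h _ hy (by simp))
  · exact not_isBounded_connectedComponentIn_of_ray (v := (-1, 0)) (by simp) fun t ht hy =>
      ht.not_gt (by simpa using h _ hy (by simp))
  · exact not_isBounded_connectedComponentIn_of_ray (v := (0, 1)) (by simp) fun t ht hy =>
      ht.not_gt (by simpa using h _ hy (by simp))
  · exact not_isBounded_connectedComponentIn_of_ray (v := (0, -1)) (by simp) fun t ht hy =>
      ht.not_gt (by simpa using h _ hy (by simp))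

theorem sides_of_mul_sub_sq_pos {x y r : ℝ} (hx : 0 ≤ x) (hy : 0 ≤ y) (hr : 0 ≤ r)
    (h : 0 < (x ^ 2 - r ^ 2) * (y ^ 2 - r ^ 2)) :
    (x < r ∧ x * y < r ^ 2) ∨ (r < x ∧ r ^ 2 < x * y) := by
  rcases pos_and_pos_or_neg_and_neg_of_mul_pos h with ⟨hx', hy'⟩ | ⟨hx', hy'⟩
  · have hxr : r < x := (pow_lt_pow_iff_left₀ hr hx two_ne_zero).1 (by linarith)
    have hyr : r < y := (pow_lt_pow_iff_left₀ hr hy two_ne_zero).1 (by linarith)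
    exact Or.inr ⟨hxr, sq r ▸ mul_lt_mul'' hxr hyr hr hr⟩
  · have hxr : x < r := (pow_lt_pow_iff_left₀ hx hr two_ne_zero).1 (by linarith)
    have hyr : y < r := (pow_lt_pow_iff_left₀ hy hr two_ne_zero).1 (by linarith)
    exact Or.inl ⟨hxr, sq r ▸ mul_lt_mul'' hxr hyr hx hy⟩

/-- For the roots `u, v` of `z² - σ z + π` this is `(‖u‖² - r²)(‖v‖² - r²)` (see
`rootSpread_add_mul`), written as a continuous function of the coefficients. -/
noncomputable def rootSpread (r : ℝ) (σ π : ℂ) : ℝ :=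
  ‖π‖ ^ 2 - r ^ 2 * (‖σ‖ ^ 2 + ‖σ ^ 2 - 4 * π‖) / 2 + r ^ 4

theorem rootSpread_add_mul (r : ℝ) (u v : ℂ) :
    rootSpread r (u + v) (u * v) = (‖u‖ ^ 2 - r ^ 2) * (‖v‖ ^ 2 - r ^ 2) := by
  have hdisc : ‖(u + v) ^ 2 - 4 * (u * v)‖ = ‖u - v‖ ^ 2 := by
    rw [← norm_pow]; ring_nf
  have := parallelogram_law_with_norm ℝ u v
  rw [rootSpread, hdisc, norm_mul]
  linear_combination (-r ^ 2 / 2) * this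

namespace CubicAmoeba

def f (a : ℝ) (z w : ℂ) : ℂ := z ^ 2 * w + z * w ^ 2 - z * w + a

variable {a : ℝ}

theorem f_comm (z w : ℂ) : f a z w = f a w z := by unfold f; ring

theorem f_eq_sub (z w : ℂ) : f a z w = a - z * w * (1 - z - w) := by unfold f; ring

theorem f_other_root (z w : ℂ) : f a (1 - w - z) w = f a z w := by unfold f; ring

theorem mul_other_root {z w : ℂ} (hw : w ≠ 0) (h : f a z w = 0) : z * (1 - w - z) = a / w := by
  rw [eq_div_iff hw]
  unfold f at h
  linear_combination -h

theorem exists_f_eq_zero (a : ℝ) {w : ℂ} (hw : w ≠ 0) : ∃ z, f a z w = 0 := by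
  obtain ⟨z, hz⟩ := exists_quadratic_eq_zero (b := w ^ 2 - w) (c := (a : ℂ)) hw
    (IsAlgClosed.exists_eq_mul_self _)
  exact ⟨z, by unfold f; linear_combination hz⟩

noncomputable def spread (a r : ℝ) (w : ℂ) : ℝ := rootSpread r (1 - w) (a / w)

theorem spread_eq {r : ℝ} {z w : ℂ} (hw : w ≠ 0) (h : f a z w = 0) :
    spread a r w = (‖z‖ ^ 2 - r ^ 2) * (‖1 - w - z‖ ^ 2 - r ^ 2) := by
  rw [spread, ← rootSpread_add_mul, ← mul_other_root hw h, add_sub_cancel]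

theorem continuousOn_spread (a r : ℝ) : ContinuousOn (spread a r) {0}ᶜ := by
  unfold spread rootSpread
  have : ContinuousOn (fun w : ℂ => (a : ℂ) / w) {0}ᶜ :=
    continuousOn_const.div continuousOn_id fun w hw => hw
  fun_prop (disch := assumption)

theorem spread_ofReal (r s : ℝ) :
    spread a r s =
      (a / s) ^ 2 - r ^ 2 * ((1 - s) ^ 2 + |(1 - s) ^ 2 - 4 * (a / s)|) / 2 + r ^ 4 := by
  rw [spread, rootSpread]
  norm_cast
  simp only [Real.norm_eq_abs, sq_abs]

theorem lt_of_spread_neg {r s : ℝ} (ha : 1 / 27 < a) (hr : 0 < r) (hs : 0 < s)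
    (h : spread a r s < 0) : r + 1 < s := by
  rw [spread_ofReal] at h
  have hπ : 0 < a / s := by positivity
  rcases lt_or_ge ((1 - s) ^ 2 - 4 * (a / s)) 0 with hD | hD
  · rw [abs_of_neg hD] at h
    nlinarith [sq_nonneg (a / s - r ^ 2)]
  · rw [abs_of_nonneg hD] at h
    -- a real pair of roots needs `s (1 - s)² ≥ 4a > 4/27`, and `27 s (1 - s)² ≤ 4` for `s ≤ 4/3`
    have hs43 : 4 / 3 < s := by
      by_contra! hs'
      have h4 : s * (4 * (a / s)) = 4 * a := by field_simp
      nlinarith [mul_nonneg hs.le hD, mul_nonneg (sub_nonneg.2 hs') (sq_nonneg (3 * s - 1))]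
    have hsq : (a / s + r ^ 2) ^ 2 < (r * (s - 1)) ^ 2 := by nlinarith
    have hlt : a / s + r ^ 2 < r * (s - 1) :=
      (pow_lt_pow_iff_left₀ (by positivity) (by nlinarith) two_ne_zero).1 hsq
    nlinarith

theorem spread_ne_zero {x : ℝ × ℝ} (hx : x ∉ logAmoeba (f a)) {w : ℂ}
    (hw : ‖w‖ = Real.exp x.2) : spread a (Real.exp x.1) w ≠ 0 := by
  have hw₀ : w ≠ 0 := norm_pos_iff.1 (hw ▸ Real.exp_pos _)
  have hoff : ∀ z, f a z w = 0 → ‖z‖ ^ 2 - Real.exp x.1 ^ 2 ≠ 0 := fun z hz hsq =>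
    hx (mem_logAmoeba_iff.2 ⟨z, w,
      (sq_eq_sq₀ (norm_nonneg z) (Real.exp_pos _).le).1 (sub_eq_zero.1 hsq), hw, hz⟩)
  obtain ⟨z, hz⟩ := exists_f_eq_zero a hw₀
  rw [spread_eq hw₀ hz]
  exact mul_ne_zero (hoff z hz) (hoff _ ((f_other_root z w).trans hz))

theorem spread_pos_of_norm_eq {x : ℝ × ℝ} (hx : x ∉ logAmoeba (f a))
    (hpos : 0 < spread a (Real.exp x.1) (Real.exp x.2)) {w : ℂ} (hw : ‖w‖ = Real.exp x.2) :
    0 < spread a (Real.exp x.1) w := by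
  have hsphere : sphere (0 : ℂ) (Real.exp x.2) ⊆ {0}ᶜ := fun w hw =>
    norm_pos_iff.1 ((mem_sphere_zero_iff_norm.1 hw).symm ▸ Real.exp_pos _)
  refine (isConnected_sphere (by simp [Complex.rank_real_complex]) 0 (Real.exp_pos _).le
    ).isPreconnected.pos_of_pos ((continuousOn_spread a _).mono hsphere)
    (fun w hw => spread_ne_zero hx (mem_sphere_zero_iff_norm.1 hw)) ?_ hpos
    (mem_sphere_zero_iff_norm.2 hw)
  simp

/-- Over the circle `‖w‖ = exp x.2` both roots in `z` lie on one side of `‖z‖ = exp x.1`; their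
product has the constant modulus `|a| / exp x.2`, which decides the side. -/
theorem slice_lt_or_gt {x : ℝ × ℝ} (hx : x ∉ logAmoeba (f a))
    (hpos : 0 < spread a (Real.exp x.1) (Real.exp x.2)) :
    (∀ y ∈ logAmoeba (f a), y.2 = x.2 → y.1 < x.1) ∨
      (∀ y ∈ logAmoeba (f a), y.2 = x.2 → x.1 < y.1) := by
  have hsides : ∀ y ∈ logAmoeba (f a), y.2 = x.2 →
      (y.1 < x.1 ∧ |a| / Real.exp x.2 < Real.exp x.1 ^ 2) ∨
        (x.1 < y.1 ∧ Real.exp x.1 ^ 2 < |a| / Real.exp x.2) := by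
    intro y hy hyx
    obtain ⟨z, w, hz, hw, hroot⟩ := mem_logAmoeba_iff.1 hy
    rw [hyx] at hw
    have hw₀ : w ≠ 0 := norm_pos_iff.1 (hw ▸ Real.exp_pos _)
    have hprod : ‖z‖ * ‖1 - w - z‖ = |a| / Real.exp x.2 := by
      rw [← norm_mul, mul_other_root hw₀ hroot, norm_div, Complex.norm_real, Real.norm_eq_abs,
        hw]
    have hspread := spread_pos_of_norm_eq hx hpos hw
    rw [spread_eq hw₀ hroot] at hspread
    rw [← hprod, ← Real.exp_lt_exp (x := y.1), ← Real.exp_lt_exp (y := y.1), ← hz]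
    exact sides_of_mul_sub_sq_pos (norm_nonneg _) (norm_nonneg _) (Real.exp_pos _).le hspread
  rcases lt_or_ge (|a| / Real.exp x.2) (Real.exp x.1 ^ 2) with h | h
  · exact Or.inl fun y hy hyx => ((hsides y hy hyx).resolve_right fun h' => h'.2.not_gt h).1
  · exact Or.inr fun y hy hyx => ((hsides y hy hyx).resolve_left fun h' => h'.2.not_ge h).1

theorem slices_alternative (ha : 1 / 27 < a) {x : ℝ × ℝ} (hx : x ∉ logAmoeba (f a)) :
    (∀ y ∈ logAmoeba (f a), y.2 = x.2 → y.1 < x.1) ∨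
      (∀ y ∈ logAmoeba (f a), y.2 = x.2 → x.1 < y.1) ∨
      (∀ y ∈ logAmoeba (f a), y.1 = x.1 → y.2 < x.2) ∨
      (∀ y ∈ logAmoeba (f a), y.1 = x.1 → x.2 < y.2) := by
  have hswap : ∀ {y : ℝ × ℝ}, y.swap ∈ logAmoeba (f a) ↔ y ∈ logAmoeba (f a) :=
    swap_mem_logAmoeba_iff f_comm
  have hx' : x.swap ∉ logAmoeba (f a) := hswap.not.2 hx
  have hnorm : ∀ t : ℝ, ‖(Real.exp t : ℂ)‖ = Real.exp t := fun t => by simp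
  rcases (spread_ne_zero hx (hnorm x.2)).lt_or_gt with h₁ | h₁
  · rcases (spread_ne_zero hx' (hnorm x.1)).lt_or_gt with h₂ | h₂
    · have h₁ := lt_of_spread_neg ha (Real.exp_pos _) (Real.exp_pos _) h₁
      have h₂ := lt_of_spread_neg ha (Real.exp_pos _) (Real.exp_pos _) h₂
      simp only [Prod.fst_swap] at h₂
      linarith
    · rcases slice_lt_or_gt hx' h₂ with h | h
      · exact Or.inr <| Or.inr <| Or.inl fun y hy hyx => h y.swap (hswap.2 hy) hyx
      · exact Or.inr <| Or.inr <| Or.inr fun y hy hyx => h y.swap (hswap.2 hy) hyx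
  · exact (slice_lt_or_gt hx h₁).imp_right Or.inl

noncomputable def barrier (a : ℝ) (p : ℝ × ℝ) : ℝ :=
  Real.exp p.1 * Real.exp p.2 * (1 - Real.exp p.1 - Real.exp p.2) - a

theorem continuous_barrier (a : ℝ) : Continuous (barrier a) := by
  unfold barrier; fun_prop

theorem mem_logAmoeba_of_barrier_eq_zero {p : ℝ × ℝ} (hp : barrier a p = 0) :
    p ∈ logAmoeba (f a) := by
  refine mem_logAmoeba_iff.2 ⟨Real.exp p.1, Real.exp p.2, by simp, by simp, ?_⟩
  rw [f_eq_sub]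
  unfold barrier at hp
  exact_mod_cast (by linear_combination -hp :
    a - Real.exp p.1 * Real.exp p.2 * (1 - Real.exp p.1 - Real.exp p.2) = 0)

theorem lt_and_lt_one_of_lt_mul {s t : ℝ} (ha : 0 < a) (hs : 0 < s) (ht : 0 < t)
    (h : a < s * t * (1 - s - t)) : a < s ∧ s < 1 := by
  have hst : 0 < 1 - s - t := pos_of_mul_pos_right (ha.trans h) (by positivity)
  constructor <;> nlinarith [mul_nonneg hs.le (sq_nonneg (2 * t - 1))]

theorem isBounded_setOf_barrier_pos (ha : 0 < a) : IsBounded {p | 0 < barrier a p} := by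
  refine ((isBounded_Ioo (Real.log a) 0).prod (isBounded_Ioo (Real.log a) 0)).subset ?_
  intro p hp
  simp only [mem_ofPred_eq, barrier, sub_pos] at hp
  obtain ⟨h₁, h₁'⟩ := lt_and_lt_one_of_lt_mul ha (Real.exp_pos _) (Real.exp_pos _) hp
  obtain ⟨h₂, h₂'⟩ := lt_and_lt_one_of_lt_mul (s := Real.exp p.2) ha (Real.exp_pos _)
    (Real.exp_pos _) (hp.trans_eq (by ring))
  simp only [mem_prod, mem_Ioo, Real.log_lt_iff_lt_exp ha, ← Real.exp_lt_one_iff]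
  exact ⟨⟨h₁, h₁'⟩, h₂, h₂'⟩

theorem isBounded_connectedComponentIn (ha : 0 < a) {x : ℝ × ℝ} (hx : x ∉ logAmoeba (f a))
    (hpos : 0 < barrier a x) : IsBounded (connectedComponentIn (logAmoeba (f a))ᶜ x) :=
  (isBounded_setOf_barrier_pos ha).subset fun _ hy =>
    isPreconnected_connectedComponentIn.pos_of_pos (continuous_barrier a).continuousOn
      (fun _ hz h =>
        absurd (mem_logAmoeba_of_barrier_eq_zero h) (connectedComponentIn_subset _ _ hz))
      (mem_connectedComponentIn hx) hpos hy

theorem barrier_log_third : barrier a (Real.log (1 / 3), Real.log (1 / 3)) = 1 / 27 - a := by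
  simp only [barrier, Real.exp_log (by norm_num : (0 : ℝ) < 1 / 3)]
  norm_num

/-- On the torus `‖z‖ = ‖w‖ = 1/3` one has `‖z w (1 - z - w)‖ ≥ (1/9) (1 - 2/3) = 1/27`. -/
theorem log_third_not_mem (ha : |a| < 1 / 27) :
    (Real.log (1 / 3), Real.log (1 / 3)) ∉ logAmoeba (f a) := by
  rintro hmem
  obtain ⟨z, w, hz, hw, hroot⟩ := mem_logAmoeba_iff.1 hmem
  simp only [Real.exp_log (by norm_num : (0 : ℝ) < 1 / 3)] at hz hw
  rw [f_eq_sub, sub_eq_zero] at hroot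
  have hnorm : |a| = ‖z‖ * ‖w‖ * ‖1 - z - w‖ := by
    rw [← norm_mul, ← norm_mul, ← hroot, Complex.norm_real, Real.norm_eq_abs]
  have htri : 1 - ‖z‖ - ‖w‖ ≤ ‖1 - z - w‖ := by
    have := norm_sub_norm_le (1 : ℂ) (z + w)
    have := norm_add_le z w
    rw [norm_one, ← sub_sub] at *
    linarith
  rw [hz, hw] at hnorm htri
  nlinarith

end CubicAmoeba

open CubicAmoeba

/-- Let `f = z₁²z₂ + z₁z₂² − z₁z₂ + a` with real parameter `a` and let
`A_f ⊆ ℝ²` be its amoeba.  If `0 < a < 1/27`, then `ℝ² ∖ A_f` has a nonempty bounded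
connected component; if `a > 1/27`, every nonempty connected component of `ℝ² ∖ A_f` is
unbounded. -/
theorem example_amoeba_bounded_component (a : ℝ)
    (A : Set (ℝ × ℝ))
    (hA : A = {x : ℝ × ℝ | ∃ z₁ z₂ : ℂ, z₁ ≠ 0 ∧ z₂ ≠ 0 ∧
      z₁ ^ 2 * z₂ + z₁ * z₂ ^ 2 - z₁ * z₂ + (a : ℂ) = 0 ∧
      x = (Real.log ‖z₁‖, Real.log ‖z₂‖)}) :
    (0 < a ∧ a < 1 / 27 →
      ∃ x ∈ Aᶜ, Bornology.IsBounded (connectedComponentIn Aᶜ x)) ∧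
    (1 / 27 < a →
      ∀ x ∈ Aᶜ, ¬ Bornology.IsBounded (connectedComponentIn Aᶜ x)) := by
  obtain rfl : A = logAmoeba (f a) := hA
  refine ⟨fun ⟨ha₀, ha⟩ => ?_, fun ha x hx => ?_⟩
  · have hx₀ := log_third_not_mem (abs_lt.2 ⟨by linarith, ha⟩)
    exact ⟨_, hx₀, isBounded_connectedComponentIn ha₀ hx₀ (by rw [barrier_log_third]; linarith)⟩
  · exact not_isBounded_connectedComponentIn_compl (slices_alternative ha hx)
end
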